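/- For every term t and every shape s of the two-constant term algebra: shape(t) = s if and only if ⌊s⌋ ≤ t and t ≤ ⌈s⌉, where ⌊s⌋ is the all-a term of shape s, defined by ⌊cs⌋ = a and ⌊gs(s₁,s₂)⌋ = g(⌊s₁⌋, ⌊s₂⌋), and ⌈s⌉ is the all-b term of shape s, defined by ⌈cs⌉ = b and ⌈gs(s₁,s₂)⌉ = g(⌈s₁⌉, ⌈s₂⌉). -/
import Mathlib


/-- Terms of the two-constant term algebra: constants `a`, `b` and a binary
constructor `g`. -/
inductive Term : Type
  | a : Term
  | b : Term
  | g (t₁ t₂ : Term) : Term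
deriving DecidableEq

/-- The structural subtype order on terms: `a ≤ a`, `a ≤ b`, `b ≤ b`, and `g` is
covariant in both arguments. -/
inductive Term.le : Term → Term → Prop
  | aa : Term.le Term.a Term.a
  | ab : Term.le Term.a Term.b
  | bb : Term.le Term.b Term.b
  | gg {s₁ s₂ t₁ t₂ : Term} : Term.le s₁ t₁ → Term.le s₂ t₂ →
      Term.le (Term.g s₁ s₂) (Term.g t₁ t₂)

instance : LE Term := ⟨Term.le⟩

/-- Shapes: a constant `cs` and a binary constructor `gs`. -/
inductive Shape : Type
  | cs : Shape
  | gs (s₁ s₂ : Shape) : Shape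
deriving DecidableEq

/-- The shape of a term. -/
def Term.shape : Term → Shape
  | Term.a => Shape.cs
  | Term.b => Shape.cs
  | Term.g t₁ t₂ => Shape.gs t₁.shape t₂.shape

/-- The all-`a` term of a given shape. -/
def Shape.floor : Shape → Term
  | Shape.cs => Term.a
  | Shape.gs s₁ s₂ => Term.g s₁.floor s₂.floor

/-- The all-`b` term of a given shape. -/
def Shape.ceil : Shape → Term
  | Shape.cs => Term.b
  | Shape.gs s₁ s₂ => Term.g s₁.ceil s₂.ceil

/-- A term has shape `s` iff it lies between the all-`a` term and the all-`b` term
of shape `s` in the subtype order. -/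
theorem shape_eq_iff_between (t : Term) (s : Shape) :
    t.shape = s ↔ (s.floor ≤ t ∧ t ≤ s.ceil) := by
  constructor
  · rintro rfl
    induction t with
    | a => exact ⟨Term.le.aa, Term.le.ab⟩
    | b => exact ⟨Term.le.ab, Term.le.bb⟩
    | g t₁ t₂ ih₁ ih₂ =>
      exact ⟨Term.le.gg ih₁.1 ih₂.1, Term.le.gg ih₁.2 ih₂.2⟩
  · rintro ⟨h₁, h₂⟩
    induction s generalizing t with
    | cs =>
      cases h₁ <;> rfl
    | gs s₁ s₂ ih₁ ih₂ =>
      cases t with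
      | a => cases h₁
      | b => cases h₁
      | g t₁ t₂ =>
        cases h₁ with
        | gg ha₁ ha₂ =>
          cases h₂ with
          | gg hb₁ hb₂ =>
            simp [Term.shape, ih₁ t₁ ha₁ hb₁, ih₂ t₂ ha₂ hb₂]
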